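/- arXiv:1205.0734 — 5 statements merged into one kernel-verified Lean document; each statement's English description precedes it below -/
import Mathlib

section
/- The set Q = { g(α,β,γ) ∈ GL₃(𝔽₄) : g(α,β,γ) is the upper triangular matrix with rows (α,β,γ), (0,α²,β²), (0,0,α), and αγ² + α²γ = β³ } is a subgroup of GL₃(𝔽₄) of order 24. -/
/-- The upper triangular matrix `g(α,β,γ)` over `𝔽₄ = GaloisField 2 2`. -/
noncomputable def gmat (α β γ : GaloisField 2 2) : Matrix (Fin 3) (Fin 3) (GaloisField 2 2) :=
  !![α, β, γ; 0, α^2, β^2; 0, 0, α]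

/-- The set `Q` inside `GL₃(𝔽₄)`. -/
def Qset : Set (GL (Fin 3) (GaloisField 2 2)) :=
  {M | ∃ α β γ : GaloisField 2 2,
    (M : Matrix (Fin 3) (Fin 3) (GaloisField 2 2)) = gmat α β γ ∧
    α * γ ^ 2 + α ^ 2 * γ = β ^ 3}

namespace QsetAux

local notation "F" => GaloisField 2 2

noncomputable instance : Fintype F := Fintype.ofFinite _

lemma two0 : (2 : F) = 0 := by exact_mod_cast CharP.cast_eq_zero F 2

lemma cardF : Fintype.card F = 4 := by
  have := GaloisField.card 2 2 (by norm_num); simpa using this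

lemma pow4 (x : F) : x ^ 4 = x := by
  have h := FiniteField.pow_card x
  rwa [cardF] at h

lemma cube {x : F} (hx : x ≠ 0) : x ^ 3 = 1 := by
  have h : x * x ^ 3 = x * 1 := by rw [mul_one]; linear_combination pow4 x
  exact mul_left_cancel₀ hx h

lemma alpha_ne {M : GL (Fin 3) F} {α β γ : F}
    (h : (M : Matrix (Fin 3) (Fin 3) F) = gmat α β γ) : α ≠ 0 := by
  have hu : IsUnit (M : Matrix (Fin 3) (Fin 3) F).det :=
    (Matrix.isUnit_iff_isUnit_det _).mp M.isUnit
  rw [h] at hu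
  have hd : (gmat α β γ).det = α ^ 4 := by
    simp [gmat, Matrix.det_fin_three, Matrix.vecHead, Matrix.vecTail]; ring
  rw [hd] at hu
  intro h0
  rw [h0] at hu
  simp at hu

lemma mul_inv_mat (α β γ : F) (hα : α ≠ 0) :
    gmat α β γ * gmat (α^2) β (α^2*β^3 + α*γ) = 1 := by
  have h3 := cube hα
  ext i j
  fin_cases i <;> fin_cases j <;>
    simp [gmat, Matrix.mul_apply, Fin.sum_univ_succ, Matrix.one_apply, Matrix.vecHead, Matrix.vecTail] <;>
    first
      | ring1
      | linear_combination h3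
      | linear_combination (β*α)*h3 + (α*β)*two0
      | linear_combination (β^3)*h3 + (β^3+α^2*γ)*two0
      | linear_combination (α^3+1)*h3
      | linear_combination (α^2*β^2)*two0

noncomputable def U (α β γ : F) (hα : α ≠ 0) : GL (Fin 3) F :=
  ⟨gmat α β γ, gmat (α^2) β (α^2*β^3 + α*γ), mul_inv_mat α β γ hα,
    mul_eq_one_comm.mp (mul_inv_mat α β γ hα)⟩

lemma keymul (α β γ α' β' γ' : F) (h3 : α^3 = 1) (hA3 : α'^3 = 1)
    (h : α * γ ^ 2 + α ^ 2 * γ = β ^ 3) (h' : α' * γ' ^ 2 + α' ^ 2 * γ' = β' ^ 3) :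
    (α*α') * (α*γ'+β*β'^2+γ*α') ^ 2 + (α*α') ^ 2 * (α*γ'+β*β'^2+γ*α') = (α*β'+β*α'^2) ^ 3 := by
  linear_combination (-(β'^3) + α'*γ'^2 + α'^2*γ') * h3
    + (-(β^3) - β^3*α'^3 + α*γ^2 - 3*α*β^2*α'*β' + α^2*γ) * hA3
    + (α*β^2*α') * pow4 β'
    + h + h'
    + (α*β*γ*α'^2*β'^2 - α*β^2*α'*β' + α^2*γ*α'^2*γ' + α^2*β*α'*β'^2*γ' - α^2*β*α'^2*β'^2) * two0

lemma keyinv (α β γ : F) (h3 : α^3 = 1)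
    (h : α * γ ^ 2 + α ^ 2 * γ = β ^ 3) :
    (α^2) * (α^2*β^3 + α*γ) ^ 2 + (α^2) ^ 2 * (α^2*β^3 + α*γ) = β ^ 3 := by
  linear_combination (β^3 + β^6 + α*γ^2 + α^2*γ + 2*α^2*β^3*γ + α^3*β^3 + α^3*β^6) * h3
    + (β^2) * pow4 β + h + (β^3 + α^2*β^3*γ) * two0

noncomputable def H : Subgroup (GL (Fin 3) F) where
  carrier := Qset
  one_mem' := by
    refine ⟨1, 0, 0, ?_, by ring⟩
    show ((1 : (Matrix (Fin 3) (Fin 3) F)ˣ) : Matrix (Fin 3) (Fin 3) F) = _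
    rw [Units.val_one]
    ext i j
    fin_cases i <;> fin_cases j <;> simp [gmat, Matrix.one_apply, Matrix.vecHead, Matrix.vecTail]
  mul_mem' := by
    rintro M N ⟨α, β, γ, hM, cM⟩ ⟨α', β', γ', hN, cN⟩
    have hα := alpha_ne hM
    have hα' := alpha_ne hN
    refine ⟨α*α', α*β'+β*α'^2, α*γ'+β*β'^2+γ*α', ?_, keymul α β γ α' β' γ' (cube hα) (cube hα') cM cN⟩
    show ((M * N : (Matrix (Fin 3) (Fin 3) F)ˣ) : Matrix (Fin 3) (Fin 3) F) = _
    rw [Units.val_mul, hM, hN]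
    ext i j
    fin_cases i <;> fin_cases j <;>
      simp [gmat, Matrix.mul_apply, Fin.sum_univ_succ, Matrix.vecHead, Matrix.vecTail] <;>
      first
        | ring1
        | linear_combination (β^2) * pow4 α' + (α*β*α'^2*β') * two0
        | linear_combination (-(β^2)) * pow4 α' + (-(α*β*α'^2*β')) * two0
  inv_mem' := by
    rintro M ⟨α, β, γ, hM, cM⟩
    have hα := alpha_ne hM
    have hU : M = U α β γ hα := Units.ext hM
    refine ⟨α^2, β, α^2*β^3 + α*γ, ?_, keyinv α β γ (cube hα) cM⟩
    rw [hU]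
    rfl

lemma exists_omega : ∃ w : F, w ^ 2 + w = 1 := by
  classical
  have hex : ∃ a : F, a ≠ 0 ∧ a ≠ 1 := by
    by_contra hc
    push_neg at hc
    have hsub : (Finset.univ : Finset F) ⊆ {0, 1} := by
      intro x _
      rcases eq_or_ne x 0 with h | h
      · simp [h]
      · simp [hc x h]
    have h1 := Finset.card_le_card hsub
    have h2 : ({0, 1} : Finset F).card ≤ 2 :=
      (Finset.card_insert_le _ _).trans (by simp)
    rw [Finset.card_univ, cardF] at h1
    omega
  obtain ⟨a, ha0, ha1⟩ := hex
  have h3 := cube ha0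
  have hf : (a - 1) * (a ^ 2 + a + 1) = 0 := by linear_combination h3
  rcases mul_eq_zero.mp hf with h | h
  · exact absurd (by linear_combination h) ha1
  · exact ⟨a, by linear_combination h - two0⟩

noncomputable def ω : F := Classical.choose exists_omega

lemma hω : ω ^ 2 + ω = 1 := Classical.choose_spec exists_omega

lemma sol0 {y : F} (h : y ^ 2 + y = 0) : y = 0 ∨ y = 1 := by
  have hf : y * (y + 1) = 0 := by linear_combination h
  rcases mul_eq_zero.mp hf with h1 | h1
  · exact Or.inl h1
  · exact Or.inr (by linear_combination h1 - two0)

lemma sol1 {y : F} (h : y ^ 2 + y = 1) : y = ω ∨ y = ω + 1 := by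
  have hf : (y + ω) * (y + ω + 1) = 0 := by linear_combination h + hω + (ω*y + 1) * two0
  rcases mul_eq_zero.mp hf with h1 | h1
  · exact Or.inl (by linear_combination h1 - ω * two0)
  · exact Or.inr (by linear_combination h1 - (ω + 1) * two0)

open Classical in
/-- canonical solution of `y^2 + y = β^3` indexed by a Bool -/
noncomputable def gam (β : F) (t : Bool) : F :=
  (if β = 0 then 0 else ω) + (if t then 1 else 0)

lemma gam_sol (β : F) (t : Bool) : (gam β t) ^ 2 + gam β t = β ^ 3 := by
  classical
  unfold gam
  rcases eq_or_ne β 0 with hβ | hβ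
  · cases t <;> simp [hβ] <;> linear_combination two0
  · have hc := cube hβ
    cases t <;> simp [hβ]
    · linear_combination hω - hc
    · linear_combination hω - hc + (ω + 1) * two0

lemma cond_of (α β γ₀ : F) (h3 : α ^ 3 = 1) (hq : γ₀ ^ 2 + γ₀ = β ^ 3) :
    α * (α * γ₀) ^ 2 + α ^ 2 * (α * γ₀) = β ^ 3 := by
  linear_combination (γ₀ ^ 2 + γ₀) * h3 + hq

noncomputable def idx (p : Fˣ × F × Bool) : GL (Fin 3) F :=
  U (p.1 : F) p.2.1 ((p.1 : F) * gam p.2.1 p.2.2) p.1.ne_zero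

lemma idx_mem (p : Fˣ × F × Bool) : idx p ∈ Qset :=
  ⟨(p.1 : F), p.2.1, (p.1 : F) * gam p.2.1 p.2.2, rfl,
    cond_of _ _ _ (cube p.1.ne_zero) (gam_sol p.2.1 p.2.2)⟩

lemma gmat_inj {α β γ α' β' γ' : F} (h : gmat α β γ = gmat α' β' γ') :
    α = α' ∧ β = β' ∧ γ = γ' := by
  refine ⟨?_, ?_, ?_⟩
  · have := congrFun (congrFun h 0) 0; simpa [gmat] using this
  · have := congrFun (congrFun h 0) 1; simpa [gmat] using this
  · have := congrFun (congrFun h 0) 2; simpa [gmat] using this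

lemma gam_inj {β : F} {t t' : Bool} (h : gam β t = gam β t') : t = t' := by
  classical
  unfold gam at h
  cases t <;> cases t' <;> simp at h ⊢ <;>
    first
      | exact (one_ne_zero h.symm).elim
      | exact (one_ne_zero h).elim

lemma idx_inj : Function.Injective idx := by
  rintro ⟨a, β, t⟩ ⟨a', β', t'⟩ h
  have hv : gmat (a : F) β ((a : F) * gam β t) = gmat (a' : F) β' ((a' : F) * gam β' t') :=
    congrArg Units.val h
  obtain ⟨h1, h2, h3⟩ := gmat_inj hv
  have ha : a = a' := Units.ext h1
  subst ha; subst h2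
  have hg : gam β t = gam β t' := mul_left_cancel₀ a.ne_zero h3
  rw [gam_inj hg]

lemma idx_surj_aux {M : GL (Fin 3) F} (hM : M ∈ Qset) : ∃ p, idx p = M := by
  classical
  obtain ⟨α, β, γ, hv, c⟩ := hM
  have hα := alpha_ne hv
  have h3 := cube hα
  set y : F := α ^ 2 * γ with hy
  have hq : y ^ 2 + y = β ^ 3 := by
    rw [hy]; linear_combination (α * γ ^ 2) * h3 + c
  have key : ∃ t : Bool, gam β t = y := by
    rcases eq_or_ne β 0 with hβ | hβ
    · have h0 : y ^ 2 + y = 0 := by rw [hq, hβ]; ring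
      rcases sol0 h0 with h | h
      · exact ⟨false, by simp [gam, hβ, h]⟩
      · exact ⟨true, by simp [gam, hβ, h]⟩
    · have h1 : y ^ 2 + y = 1 := by rw [hq, cube hβ]
      rcases sol1 h1 with h | h
      · exact ⟨false, by simp [gam, hβ, h]⟩
      · exact ⟨true, by simp [gam, hβ, h]⟩
  obtain ⟨t, ht⟩ := key
  refine ⟨(Units.mk0 α hα, β, t), ?_⟩
  apply Units.ext
  show gmat α β (α * gam β t) = (M : Matrix (Fin 3) (Fin 3) F)
  rw [hv, ht]
  have : α * y = γ := by rw [hy]; linear_combination γ * h3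
  rw [this]

end QsetAux

/-- `Q` is a subgroup of `GL₃(𝔽₄)` of order 24. -/
theorem stmt0 : ∃ H : Subgroup (GL (Fin 3) (GaloisField 2 2)),
    (H : Set (GL (Fin 3) (GaloisField 2 2))) = Qset ∧ Nat.card H = 24 := by
  refine ⟨QsetAux.H, rfl, ?_⟩
  have e : ∀ p : (GaloisField 2 2)ˣ × (GaloisField 2 2) × Bool,
      QsetAux.idx p ∈ QsetAux.H := fun p => QsetAux.idx_mem p
  have hbij : Function.Bijective
      (fun p : (GaloisField 2 2)ˣ × (GaloisField 2 2) × Bool =>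
        (⟨QsetAux.idx p, QsetAux.idx_mem p⟩ : QsetAux.H)) := by
    constructor
    · intro p q h
      exact QsetAux.idx_inj (congrArg Subtype.val h)
    · rintro ⟨M, hM⟩
      obtain ⟨p, hp⟩ := QsetAux.idx_surj_aux hM
      exact ⟨p, Subtype.ext hp⟩
  rw [← Nat.card_eq_of_bijective _ hbij]
  rw [Nat.card_prod, Nat.card_prod, Nat.card_units,
    Nat.card_eq_fintype_card (α := GaloisField 2 2), QsetAux.cardF,
    Nat.card_eq_fintype_card (α := Bool)]
  norm_num
end

section
/- The subset Z of Q consisting of elements g(1,0,γ) with γ² + γ = 0 is the center of Q, and Z has order 2. -/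
/-- The subset `Z` of `Q`: elements `g(1,0,γ)` with `γ² + γ = 0`. -/
def Zset : Set (GL (Fin 3) (GaloisField 2 2)) :=
  {M | ∃ γ : GaloisField 2 2,
    (M : Matrix (Fin 3) (Fin 3) (GaloisField 2 2)) = gmat 1 0 γ ∧ γ ^ 2 + γ = 0}

namespace StmtAux

abbrev F := GaloisField 2 2

lemma Fchar2 : (2 : F) = 0 := by exact_mod_cast CharP.cast_eq_zero F 2

lemma Fpow4 (x : F) : x ^ 4 = x := by
  haveI : Fintype F := Fintype.ofFinite F
  have h := FiniteField.pow_card x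
  have hc : Fintype.card F = 4 := by simpa using GaloisField.card 2 2 (by norm_num)
  rwa [hc] at h

lemma exists_omega : ∃ ω : F, ω ^ 2 + ω = 1 ∧ ω ≠ 0 ∧ ω ≠ 1 := by
  haveI : Fintype F := Fintype.ofFinite F
  haveI : DecidableEq F := Classical.decEq F
  have hc : Fintype.card F = 4 := by simpa using GaloisField.card 2 2 (by norm_num)
  have : ∃ ω : F, ω ≠ 0 ∧ ω ≠ 1 := by
    by_contra h
    push_neg at h
    have hsub : (Finset.univ : Finset F) ⊆ ({0, 1} : Finset F) := by
      intro x _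
      rcases eq_or_ne x 0 with h0 | h0
      · simp [h0]
      · simp [h x h0]
    have hle := Finset.card_le_card hsub
    rw [Finset.card_univ, hc] at hle
    have h2 : ({0, 1} : Finset F).card ≤ 2 :=
      (Finset.card_insert_le _ _).trans (by simp)
    omega
  obtain ⟨ω, h0, h1⟩ := this
  refine ⟨ω, ?_, h0, h1⟩
  have hfac : ω * (ω - 1) * (ω ^ 2 + ω + 1) = 0 := by linear_combination Fpow4 ω
  have h3 : ω ^ 2 + ω + 1 = 0 := by
    rcases mul_eq_zero.mp hfac with h | h
    · rcases mul_eq_zero.mp h with h | h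
      · exact absurd h h0
      · exact absurd (by linear_combination h) h1
    · exact h
  linear_combination h3 - Fchar2

lemma gmul (α β γ a b c : F) :
    gmat α β γ * gmat a b c = gmat (α*a) (α*b+β*a^2) (α*c+β*b^2+γ*a) := by
  have h2 := Fchar2
  have ha4 := Fpow4 a
  ext i j
  fin_cases i <;> fin_cases j <;>
    simp [gmat, Matrix.mul_apply, Fin.sum_univ_three, Matrix.vecHead, Matrix.vecTail] <;>
    first
      | ring1
      | linear_combination (-β^2) * ha4 + (-(α*b*β*a^2)) * h2
      | linear_combination (β^2) * ha4 + (α*b*β*a^2) * h2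

lemma gdet (α β γ : F) : (gmat α β γ).det = α := by
  rw [Matrix.det_fin_three]
  simp [gmat, Matrix.vecHead, Matrix.vecTail]
  rw [show α * α ^ 2 * α = α ^ 4 by ring, Fpow4]

lemma ginj {α β γ a b c : F} (h : gmat α β γ = gmat a b c) : α = a ∧ β = b ∧ γ = c := by
  refine ⟨?_, ?_, ?_⟩
  · have := congrFun (congrFun h 0) 0; simpa [gmat] using this
  · have := congrFun (congrFun h 0) 1; simpa [gmat] using this
  · have := congrFun (congrFun h 0) 2; simpa [gmat] using this

lemma gcongr {α β γ a b c : F} (h1 : α = a) (h2 : β = b) (h3 : γ = c) :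
    gmat α β γ = gmat a b c := by rw [h1, h2, h3]

lemma g100 : gmat 1 0 0 = (1 : Matrix (Fin 3) (Fin 3) F) := by
  ext i j
  fin_cases i <;> fin_cases j <;>
    simp [gmat, Matrix.one_apply, Matrix.vecHead, Matrix.vecTail]

lemma isUnit_gmat {α β γ : F} (h : α ≠ 0) : IsUnit (gmat α β γ) := by
  rw [Matrix.isUnit_iff_isUnit_det, gdet]
  exact h.isUnit

end StmtAux

open StmtAux in
/-- `Z` is the center of `Q` and has order 2. -/
theorem stmt2 (HQ : Subgroup (GL (Fin 3) (GaloisField 2 2)))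
    (hQ : (HQ : Set (GL (Fin 3) (GaloisField 2 2))) = Qset) :
    ((Subgroup.center HQ : Set HQ) = {x : HQ | (x : GL (Fin 3) (GaloisField 2 2)) ∈ Zset}) ∧
      Nat.card (Subgroup.center HQ) = 2 := by
  have hmem : ∀ x : GL (Fin 3) F, x ∈ HQ ↔ x ∈ Qset := by
    intro x; rw [← SetLike.mem_coe, hQ]
  obtain ⟨ω, hω, hω0, hω1⟩ := exists_omega
  -- test elements of Q
  have hu1 : IsUnit (gmat ω 0 0) := isUnit_gmat hω0
  have hu2 : IsUnit (gmat 1 1 ω) := isUnit_gmat one_ne_zero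
  have hy1mem : hu1.unit ∈ HQ := by
    rw [hmem]
    exact ⟨ω, 0, 0, hu1.unit_spec, by ring⟩
  have hy2mem : hu2.unit ∈ HQ := by
    rw [hmem]
    exact ⟨1, 1, ω, hu2.unit_spec, by linear_combination hω⟩
  -- data extraction for any element of HQ
  have hdata : ∀ x : HQ, ∃ α β γ : F,
      ((x : GL (Fin 3) F) : Matrix (Fin 3) (Fin 3) F) = gmat α β γ ∧
      α * γ ^ 2 + α ^ 2 * γ = β ^ 3 ∧ α ≠ 0 := by
    intro x
    obtain ⟨α, β, γ, hx, hcond⟩ := (hmem _).mp x.2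
    refine ⟨α, β, γ, hx, hcond, ?_⟩
    have hu : IsUnit ((x : GL (Fin 3) F) : Matrix (Fin 3) (Fin 3) F).det := by
      rw [← Matrix.isUnit_iff_isUnit_det]
      exact (x : GL (Fin 3) F).isUnit
    rw [hx, gdet] at hu
    exact hu.ne_zero
  -- the center characterization
  have hcen : (Subgroup.center HQ : Set HQ) =
      {x : HQ | (x : GL (Fin 3) (GaloisField 2 2)) ∈ Zset} := by
    ext x
    simp only [SetLike.mem_coe, Set.mem_setOf_eq]
    obtain ⟨α, β, γ, hx, hcond, hα⟩ := hdata x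
    constructor
    · intro hc
      rw [Subgroup.mem_center_iff] at hc
      -- commute with y1 = g(ω,0,0)
      have e1 := congrArg (fun z : HQ => ((z : GL (Fin 3) F) : Matrix (Fin 3) (Fin 3) F))
        (hc ⟨hu1.unit, hy1mem⟩)
      simp only [Subgroup.coe_mul, Units.val_mul, hu1.unit_spec, hx, gmul] at e1
      have hβ : β = 0 := by
        have h := (ginj e1).2.1
        have hm1 : ω - ω ^ 2 = -1 := by linear_combination -hω + ω * Fchar2
        have hb : β * (ω - ω ^ 2) = 0 := by linear_combination h
        rw [hm1] at hb
        simpa using hb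
      -- commute with y2 = g(1,1,ω)
      have e2 := congrArg (fun z : HQ => ((z : GL (Fin 3) F) : Matrix (Fin 3) (Fin 3) F))
        (hc ⟨hu2.unit, hy2mem⟩)
      simp only [Subgroup.coe_mul, Units.val_mul, hu2.unit_spec, hx, gmul] at e2
      have hα1 : α = 1 := by
        have h := (ginj e2).2.1
        have hz : α * (α - 1) = 0 := by linear_combination h
        rcases mul_eq_zero.mp hz with h' | h'
        · exact absurd h' hα
        · linear_combination h'
      refine ⟨γ, ?_, ?_⟩
      · rw [hx]; exact gcongr hα1 hβ rfl
      · rw [hα1, hβ] at hcond; linear_combination hcond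
    · rintro ⟨c, hxz, hc⟩
      rw [Subgroup.mem_center_iff]
      intro g
      obtain ⟨a, b, c', hg, _, _⟩ := hdata g
      apply Subtype.ext
      apply Units.ext
      show ((g : GL (Fin 3) F) : Matrix (Fin 3) (Fin 3) F) * _ = _ * _
      rw [hg, hxz, gmul, gmul]
      exact gcongr (by ring) (by ring) (by ring)
  refine ⟨hcen, ?_⟩
  -- cardinality
  have hu3 : IsUnit (gmat 1 0 1) := isUnit_gmat (one_ne_zero (α := F))
  have h1eq : ((1 : GL (Fin 3) F) : Matrix (Fin 3) (Fin 3) F) = gmat 1 0 0 := by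
    rw [g100]; rfl
  have h1mem : (1 : GL (Fin 3) F) ∈ HQ := by
    rw [hmem]
    exact ⟨1, 0, 0, h1eq, by norm_num⟩
  have h3mem : hu3.unit ∈ HQ := by
    rw [hmem]
    exact ⟨1, 0, 1, hu3.unit_spec, by linear_combination Fchar2⟩
  set x₀ : HQ := ⟨1, h1mem⟩ with hx₀
  set x₁ : HQ := ⟨hu3.unit, h3mem⟩ with hx₁
  have hne : x₀ ≠ x₁ := by
    intro h
    have he : ((1 : GL (Fin 3) F) : Matrix (Fin 3) (Fin 3) F) = gmat 1 0 1 := by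
      rw [← hu3.unit_spec]
      exact congrArg (fun z : HQ => ((z : GL (Fin 3) F) : Matrix (Fin 3) (Fin 3) F)) h
    have := (ginj (h1eq.symm.trans he)).2.2
    exact zero_ne_one this
  have hset : {x : HQ | (x : GL (Fin 3) (GaloisField 2 2)) ∈ Zset} = {x₀, x₁} := by
    ext x
    simp only [Set.mem_setOf_eq, Set.mem_insert_iff, Set.mem_singleton_iff]
    constructor
    · rintro ⟨c, hx, hc⟩
      have hz : c * (c - 1) = 0 := by linear_combination hc - c * Fchar2
      rcases mul_eq_zero.mp hz with h' | h'
      · left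
        apply Subtype.ext; apply Units.ext
        show ((x : GL (Fin 3) F) : Matrix (Fin 3) (Fin 3) F) = _
        rw [hx, h']
        exact h1eq.symm
      · right
        apply Subtype.ext; apply Units.ext
        show ((x : GL (Fin 3) F) : Matrix (Fin 3) (Fin 3) F) = _
        rw [hx, show c = 1 by linear_combination h', hu3.unit_spec]
    · rintro (rfl | rfl)
      · exact ⟨0, h1eq, by norm_num⟩
      · exact ⟨1, hu3.unit_spec, by linear_combination Fchar2⟩
  rw [← SetLike.coe_sort_coe, hcen, hset, Nat.card_coe_set_eq, Set.ncard_pair hne]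
end

section
/- For any γ ∈ 𝔽₄ˣ with γ ≠ 1, the element g(1,1,γ) of Q generates a cyclic subgroup of order 4, and its square lies in the center Z of Q. -/
/-! In characteristic 2 the cross terms of `g(1,β,γ)²` cancel, leaving `g(1,β,γ)² = g(1,0,β³)`;
squaring once more gives `g(1,0,0) = 1`. So `g(1,β,γ)` has order 4 as soon as `β ≠ 0`. The
elements of `𝔽₄ \ {0,1}` are the primitive cube roots of unity, so `γ² + γ + 1 = 0`, which in
characteristic 2 is the equation of `Q` at `α = β = 1`. -/

theorem sq_add_self_add_one_eq_zero_of_natCard_eq_four {K : Type*} [Field K] [Finite K]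
    (hK : Nat.card K = 4) {x : K} (h0 : x ≠ 0) (h1 : x ≠ 1) : x ^ 2 + x + 1 = 0 := by
  have : Fintype K := Fintype.ofFinite K
  have hx4 : x ^ 4 = x := by
    simpa [← Nat.card_eq_fintype_card, hK] using FiniteField.pow_card x
  have hx3 : x ^ 3 = 1 := by
    apply mul_left_cancel₀ h0
    linear_combination hx4
  have hfactor : (x - 1) * (x ^ 2 + x + 1) = 0 := by linear_combination hx3
  exact (mul_eq_zero.mp hfactor).resolve_left (sub_ne_zero.mpr h1)

theorem gmat_one_sq (β γ : GaloisField 2 2) : gmat 1 β γ ^ 2 = gmat 1 0 (β ^ 3) := by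
  ext i j
  fin_cases i <;> fin_cases j <;>
    simp [gmat, sq, Matrix.mul_apply, Fin.sum_univ_three] <;>
    grind

theorem gmat_one_zero_zero : gmat 1 0 0 = 1 := by
  simp [gmat, Matrix.one_fin_three]

theorem gmat_one_zero_ne_one {c : GaloisField 2 2} (hc : c ≠ 0) : gmat 1 0 c ≠ 1 := by
  intro h
  exact hc (by simpa [gmat] using congrFun (congrFun h 0) 2)

theorem orderOf_eq_four_of_val_eq_gmat {β γ : GaloisField 2 2} (hβ : β ≠ 0)
    {M : GL (Fin 3) (GaloisField 2 2)} (hM : (M : Matrix (Fin 3) (Fin 3) _) = gmat 1 β γ) :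
    orderOf M = 4 := by
  have hsq : ((M ^ 2 : GL (Fin 3) (GaloisField 2 2)) : Matrix (Fin 3) (Fin 3) _) =
      gmat 1 0 (β ^ 3) := by
    rw [Units.val_pow_eq_pow_val, hM, gmat_one_sq]
  have hsq_ne : M ^ 2 ≠ 1 := fun h ↦
    gmat_one_zero_ne_one (pow_ne_zero 3 hβ) (by rw [← hsq, h, Units.val_one])
  have hfour : M ^ 4 = 1 := by
    ext1
    rw [show 4 = 2 * 2 from rfl, pow_mul, Units.val_pow_eq_pow_val, hsq, gmat_one_sq,
      zero_pow three_ne_zero, gmat_one_zero_zero, Units.val_one]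
  exact orderOf_eq_prime_pow (p := 2) (n := 1) (by simpa using hsq_ne) (by simpa using hfour)

/-- For `γ ∈ 𝔽₄ˣ`, `γ ≠ 1`, the element `g(1,1,γ)` of `Q` generates a cyclic subgroup of
order 4, and its square lies in the center `Z` of `Q`. -/
theorem stmt3 (γ : GaloisField 2 2) (hγ0 : γ ≠ 0) (hγ1 : γ ≠ 1)
    (M : GL (Fin 3) (GaloisField 2 2))
    (hM : (M : Matrix (Fin 3) (Fin 3) (GaloisField 2 2)) = gmat 1 1 γ) :
    M ∈ Qset ∧ IsCyclic (Subgroup.zpowers M) ∧ Nat.card (Subgroup.zpowers M) = 4 ∧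
      (M ^ 2 : GL (Fin 3) (GaloisField 2 2)) ∈ Zset := by
  have hγ : γ ^ 2 + γ + 1 = 0 :=
    sq_add_self_add_one_eq_zero_of_natCard_eq_four (GaloisField.card 2 2 two_ne_zero) hγ0 hγ1
  have hsq : ((M ^ 2 : GL (Fin 3) (GaloisField 2 2)) : Matrix (Fin 3) (Fin 3) _) = gmat 1 0 1 := by
    rw [Units.val_pow_eq_pow_val, hM, gmat_one_sq, one_pow]
  refine ⟨⟨1, 1, γ, hM, ?_⟩, inferInstance, ?_, ⟨1, hsq, ?_⟩⟩
  · linear_combination hγ - CharTwo.two_eq_zero (R := GaloisField 2 2)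
  · rw [Nat.card_zpowers, orderOf_eq_four_of_val_eq_gmat one_ne_zero hM]
  · linear_combination CharTwo.two_eq_zero (R := GaloisField 2 2)
end

section
/- Let k be a finite field with q = 2^f elements, f even, and let χ₂ : 𝔽₂ → ℂˣ be the nontrivial character. Then ∑_{ξ ∈ k} χ₂(Tr_{k/𝔽₂}(ξ³)) = −2·(−2)^{f/2}. -/
/-- The nontrivial character `χ₂ : 𝔽₂ → ℂˣ`, `χ₂(0) = 1`, `χ₂(1) = -1`. -/
noncomputable def χ₂ (x : ZMod 2) : ℂ := (-1) ^ x.val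

/-!
Let `ψ x = (-1) ^ Tr x` and `T = ∑ ψ (ξ³) ∈ ℤ`. In characteristic 2,
`(u + η)³ = u³ + (u²η + uη²) + η³`, and since `ψ (x²) = ψ x` the phase `u²η + uη²` becomes
linear in `η` after substituting `u = w²`. Orthogonality of characters then gives
`T² = q · #{w | w⁴ = w} = 4q`: the four elements are `0` and the cube roots of unity, which
lie in `k` because `3 ∣ q - 1` for `f` even. So `T = ±2^(f/2 + 1)`, and the sign is fixed by
`T ≡ 1 (mod 3)`, as the fibres of `ξ ↦ ξ³` over nonzero values have three elements each.
-/

open Finset Polynomial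

theorem Algebra.trace_pow_card (K L : Type*) [Field K] [Fintype K] [Field L] [Finite L]
    [Algebra K L] (x : L) : Algebra.trace K L (x ^ Fintype.card K) = Algebra.trace K L x :=
  Algebra.trace_eq_of_algEquiv (FiniteField.frobeniusAlgEquivOfAlgebraic K L) x

theorem FiniteField.exists_isPrimitiveRoot_of_dvd_card_sub_one {k : Type*} [Field k] [Fintype k]
    (p : ℕ) [Fact p.Prime] (hp : p ∣ Fintype.card k - 1) : ∃ ζ : k, IsPrimitiveRoot ζ p := by
  classical
  obtain ⟨ζ, hζ⟩ := exists_prime_orderOf_dvd_card p (G := kˣ) (by rwa [Fintype.card_units])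
  exact ⟨ζ, IsPrimitiveRoot.coe_units_iff.mpr (hζ ▸ IsPrimitiveRoot.orderOf ζ)⟩

namespace IsPrimitiveRoot

variable {k : Type*} [Field k] {ζ : k} {n : ℕ}

theorem card_nthRootsFinset_pow (hζ : IsPrimitiveRoot ζ n) {x : k} (hx : x ≠ 0) :
    #(nthRootsFinset n (x ^ n)) = n := by
  classical
  rw [nthRootsFinset_def, Multiset.toFinset_card_of_nodup (hζ.nthRoots_nodup (pow_ne_zero n hx)),
    hζ.card_nthRoots, if_pos ⟨x, rfl⟩]

theorem card_filter_pow_succ_eq_self [Fintype k] [DecidableEq k] [NeZero n] (hζ : IsPrimitiveRoot ζ n) :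
    #{x : k | x ^ (n + 1) = x} = n + 1 := by
  have hn : 0 < n := Nat.pos_of_neZero n
  have hfilter : ({x : k | x ^ (n + 1) = x} : Finset k) = insert 0 (nthRootsFinset n 1) := by
    ext x
    rw [mem_filter_univ, mem_insert, Polynomial.mem_nthRootsFinset hn, pow_succ]
    constructor
    · intro h
      by_contra! hx
      exact hx.2 (mul_left_cancel₀ hx.1 (by rw [mul_one, mul_comm, h]))
    · rintro (rfl | h) <;> simp [*]
  rw [hfilter, card_insert_of_notMem (by simp [Polynomial.mem_nthRootsFinset hn, zero_pow hn.ne']),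
    hζ.card_nthRootsFinset]

theorem exists_sum_pow_eq_add_nsmul [Fintype k] [NeZero n] (hζ : IsPrimitiveRoot ζ n)
    {M : Type*} [AddCommMonoid M] (g : k → M) : ∃ s : M, ∑ x, g (x ^ n) = g 0 + n • s := by
  classical
  have hn : n ≠ 0 := NeZero.ne n
  have card_fiber {x : k} (hx : x ≠ 0) : #{z ∈ univ.erase 0 | z ^ n = x ^ n} = n := by
    refine (congrArg card ?_).trans (hζ.card_nthRootsFinset_pow hx)
    ext z
    simp only [mem_filter, mem_erase, mem_univ, and_true,
      Polynomial.mem_nthRootsFinset (Nat.pos_of_ne_zero hn)]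
    refine ⟨And.right, fun h ↦ ⟨?_, h⟩⟩
    rintro rfl
    exact pow_ne_zero n hx (by rw [← h, zero_pow hn])
  refine ⟨∑ y ∈ (univ.erase 0).image (· ^ n), g y, ?_⟩
  rw [← add_sum_erase _ _ (mem_univ 0), zero_pow hn, Finset.sum_comp, smul_sum]
  congr 1
  refine sum_congr rfl fun y hy ↦ ?_
  obtain ⟨x, hx, rfl⟩ := mem_image.mp hy
  rw [card_fiber (ne_of_mem_erase hx)]

end IsPrimitiveRoot

namespace AddChar

theorem mul_self_eq_one_of_charTwo {k R : Type*} [Ring k] [CharP k 2] [CommMonoid R]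
    (ψ : AddChar k R) (x : k) : ψ x * ψ x = 1 := by
  rw [← map_add_eq_mul, CharTwo.add_self_eq_zero, map_zero_eq_one]

variable {k R : Type*} [Field k] [CharP k 2] [CommRing R] {ψ : AddChar k R}

theorem sq_sum_cube [Fintype k] [DecidableEq k] [IsDomain R] (hψ : ψ.IsPrimitive)
    (hsq : ∀ x, ψ (x ^ 2) = ψ x) :
    (∑ x, ψ (x ^ 3)) ^ 2 = Fintype.card k * ∑ w : k with w ^ 4 = w, ψ (w ^ 3) := by
  have shift (u η : k) :
      ψ ((u + η) ^ 3) * ψ (η ^ 3) = ψ (u ^ 3) * ψ (u ^ 2 * η + u * η ^ 2) := by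
    have : (u + η) ^ 3 = u ^ 3 + (u ^ 2 * η + u * η ^ 2) + η ^ 3 := by
      linear_combination (u ^ 2 * η + u * η ^ 2) * CharTwo.two_eq_zero (R := k)
    rw [this, map_add_eq_mul, map_add_eq_mul, mul_assoc, mul_self_eq_one_of_charTwo, mul_one]
  have linearize (w η : k) : ψ ((w ^ 2) ^ 2 * η + w ^ 2 * η ^ 2) = ψ (η * (w ^ 4 + w)) := by
    rw [map_add_eq_mul, ← mul_pow, hsq, ← map_add_eq_mul]
    ring_nf
  calc (∑ x, ψ (x ^ 3)) ^ 2 = ∑ η, ∑ u, ψ ((u + η) ^ 3) * ψ (η ^ 3) := by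
        rw [sq, sum_mul_sum, sum_comm]
        exact sum_congr rfl fun η _ ↦ (Fintype.sum_equiv (Equiv.addRight η) _ _ fun _ ↦ rfl).symm
    _ = ∑ u, ψ (u ^ 3) * ∑ η, ψ (u ^ 2 * η + u * η ^ 2) := by
        rw [sum_comm]
        simp_rw [shift, mul_sum]
    _ = ∑ w, ψ ((w ^ 2) ^ 3) * ∑ η, ψ (η * (w ^ 4 + w)) := by
        rw [← (bijective_frobenius k 2).sum_comp]
        simp_rw [frobenius_def, linearize]
    _ = ∑ w, ψ (w ^ 3) * if w ^ 4 + w = 0 then (Fintype.card k : R) else 0 := by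
        simp_rw [sum_mulShift _ hψ, Nat.cast_ite, Nat.cast_zero, ← pow_mul, mul_comm 2 3, pow_mul,
          hsq]
    _ = Fintype.card k * ∑ w : k with w ^ 4 = w, ψ (w ^ 3) := by
        simp_rw [mul_sum, sum_filter, CharTwo.add_eq_zero, mul_ite, mul_zero, mul_comm]

theorem map_one_eq_one_of_isPrimitiveRoot_three {ω : k} (hω : IsPrimitiveRoot ω 3)
    (hsq : ∀ x, ψ (x ^ 2) = ψ x) : ψ 1 = 1 := by
  have hsum := hω.geom_sum_eq_zero (by norm_num)
  simp only [sum_range_succ, sum_range_zero, pow_zero, pow_one, zero_add] at hsum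
  have : (1 : k) = ω + ω ^ 2 := by
    linear_combination hsum - (ω + ω ^ 2) * CharTwo.two_eq_zero (R := k)
  rw [this, map_add_eq_mul, hsq, mul_self_eq_one_of_charTwo]

theorem sum_filter_pow_four_eq_self [Fintype k] [DecidableEq k] {ω : k}
    (hω : IsPrimitiveRoot ω 3) (hsq : ∀ x, ψ (x ^ 2) = ψ x) :
    ∑ w : k with w ^ 4 = w, ψ (w ^ 3) = 4 := by
  have hone : ∀ w ∈ ({w : k | w ^ 4 = w} : Finset k), ψ (w ^ 3) = 1 := by
    intro w hw
    rw [mem_filter_univ] at hw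
    rcases eq_or_ne w 0 with rfl | hw0
    · rw [zero_pow three_ne_zero, map_zero_eq_one]
    · rw [mul_left_cancel₀ hw0 (by rw [mul_one, ← pow_succ']; exact hw : w * w ^ 3 = w * 1),
        map_one_eq_one_of_isPrimitiveRoot_three hω hsq]
  rw [sum_congr rfl hone, sum_const, hω.card_filter_pow_succ_eq_self, nsmul_one]
  norm_num

end AddChar

def ZMod.signChar : AddChar (ZMod 2) ℤ where
  toFun x := (-1) ^ x.val
  map_zero_eq_one' := rfl
  map_add_eq_mul' := by decide

@[simp]
theorem ZMod.signChar_apply (x : ZMod 2) : ZMod.signChar x = (-1) ^ x.val := rfl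

noncomputable def traceSignChar (k : Type*) [Field k] [Algebra (ZMod 2) k] : AddChar k ℤ :=
  ZMod.signChar.compAddMonoidHom (Algebra.trace (ZMod 2) k).toAddMonoidHom

section traceSignChar

variable {k : Type*} [Field k] [Finite k] [Algebra (ZMod 2) k]

theorem traceSignChar_isPrimitive : (traceSignChar k).IsPrimitive := by
  refine AddChar.IsPrimitive.of_ne_one (AddChar.ne_one_iff.mpr ?_)
  obtain ⟨x, hx⟩ := Algebra.trace_surjective (ZMod 2) k 1
  exact ⟨x, by simp only [traceSignChar, AddChar.compAddMonoidHom_apply,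
    LinearMap.toAddMonoidHom_coe, hx]; decide⟩

theorem traceSignChar_sq (x : k) : traceSignChar k (x ^ 2) = traceSignChar k x := by
  have := Algebra.trace_pow_card (ZMod 2) k x
  rw [ZMod.card] at this
  simp only [traceSignChar, AddChar.compAddMonoidHom_apply, LinearMap.toAddMonoidHom_coe, this]

end traceSignChar

theorem Int.eq_neg_two_pow_of_sq_eq {T : ℤ} {m : ℕ} (hsq : T ^ 2 = 4 ^ m)
    (hmod : T ≡ 1 [ZMOD 3]) : T = (-2) ^ m := by
  have hpow : (-2 : ℤ) ^ m ≡ 1 [ZMOD 3] := by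
    simpa using (show (-2 : ℤ) ≡ 1 [ZMOD 3] by decide).pow m
  have hsq' : T ^ 2 = ((-2) ^ m) ^ 2 := by rw [hsq, sq, ← mul_pow]; norm_num
  rcases sq_eq_sq_iff_eq_or_eq_neg.mp hsq' with h | h
  · exact h
  · have := hmod.symm.trans (h ▸ hpow.neg)
    unfold Int.ModEq at this
    omega

/-- For `k` a finite field with `q = 2^f` elements, `f` even,
`∑_{ξ ∈ k} χ₂(Tr_{k/𝔽₂}(ξ³)) = -2·(-2)^{f/2}`. -/
theorem stmt11 (k : Type*) [Field k] [Fintype k] [Algebra (ZMod 2) k]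
    (f : ℕ) (hf : Even f) (hcard : Fintype.card k = 2 ^ f) :
    ∑ ξ : k, χ₂ (Algebra.trace (ZMod 2) k (ξ ^ 3)) = -2 * (-2 : ℂ) ^ (f / 2) := by
  classical
  obtain ⟨m, rfl⟩ := hf.two_dvd
  have : CharP k 2 := charP_of_injective_algebraMap' (ZMod 2) 2
  have hsq := traceSignChar_sq (k := k)
  obtain ⟨ω, hω⟩ : ∃ ω : k, IsPrimitiveRoot ω 3 :=
    FiniteField.exists_isPrimitiveRoot_of_dvd_card_sub_one 3 <| by
      simpa [hcard, pow_mul] using Nat.sub_dvd_pow_sub_pow 4 1 m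
  have hsum : ∑ ξ : k, traceSignChar k (ξ ^ 3) = (-2) ^ (m + 1) := by
    apply Int.eq_neg_two_pow_of_sq_eq
    · rw [AddChar.sq_sum_cube traceSignChar_isPrimitive hsq,
        AddChar.sum_filter_pow_four_eq_self hω hsq, hcard]
      push_cast
      rw [pow_mul]
      ring
    · obtain ⟨s, hs⟩ := hω.exists_sum_pow_eq_add_nsmul (traceSignChar k ·)
      rw [hs, AddChar.map_zero_eq_one]
      exact (Int.modEq_iff_dvd.mpr ⟨s, by simp⟩).symm
  rw [show 2 * m / 2 = m by omega, ← pow_succ']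
  simp_rw [χ₂]
  exact_mod_cast hsum
end

section
/- In the group Q ⋊ ℤ where n ∈ ℤ acts on Q by g(α,β,γ) ↦ g(α^{q^n}, β^{q^n}, γ^{q^n}) for q = 2^f with f odd, the following identity holds: (g(1,ζ₃,ζ₃),0)⁻¹ · (g(1,ζ₃,ζ₃),1) · (g(1,ζ₃,ζ₃),0) = (g(1,ζ₃,ζ₃),1)³ · (g(1,0,0),−2), where ζ₃ ∈ 𝔽₄ satisfies ζ₃² + ζ₃ + 1 = 0. -/
/-- The Frobenius (squaring) automorphism of `GL₃(𝔽₄)`, acting entrywise. -/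
noncomputable def frobGL : MulAut (GL (Fin 3) (GaloisField 2 2)) :=
  Units.mapEquiv (RingEquiv.mapMatrix (frobeniusEquiv (GaloisField 2 2) 2)).toMulEquiv

/-- The action of `ℤ` on `GL₃(𝔽₄)` where `n` acts by the entrywise `q^n`-power map,
`q = 2^f`. -/
noncomputable def φ (f : ℕ) : Multiplicative ℤ →* MulAut (GL (Fin 3) (GaloisField 2 2)) :=
  zpowersHom _ (frobGL ^ f)

/-! Since `x ^ 4 = x` on `𝔽₄`, the entrywise Frobenius `σ` of `GL₃(𝔽₄)` is an involution, so for odd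
`f` the generator of `ℤ` acts by `σ` itself. Multiplying out in the semidirect product, the identity
reduces to `M * σ M * M = σ M` for `M = g(1,ζ,ζ)`, `σ M = g(1,ζ²,ζ²)`, which follows from the product
rule `g(1,β,γ) * g(1,β',γ') = g(1, β+β', γ+γ'+ββ'²)` in characteristic `2`. -/

theorem SemidirectProduct.conj_eq_pow_three_mul {G : Type*} [Group G] (σ : MulAut G) {M : G}
    (hσ : σ (σ M) = M) (hM : M * σ M * M = σ M) :
    (⟨M, Multiplicative.ofAdd 0⟩ : SemidirectProduct G (Multiplicative ℤ) (zpowersHom _ σ))⁻¹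
        * ⟨M, Multiplicative.ofAdd 1⟩ * ⟨M, Multiplicative.ofAdd 0⟩
      = (⟨M, Multiplicative.ofAdd 1⟩ : SemidirectProduct G (Multiplicative ℤ) (zpowersHom _ σ)) ^ 3
        * ⟨1, Multiplicative.ofAdd (-2)⟩ := by
  ext
  · simpa [pow_succ, ← ofAdd_add, hσ] using hM.symm
  · simp [pow_succ, ← ofAdd_add]

theorem GaloisField.pow_four_eq_self (x : GaloisField 2 2) : x ^ 4 = x := by
  have := Fintype.ofFinite (GaloisField 2 2)
  have hcard : Fintype.card (GaloisField 2 2) = 4 := by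
    rw [← Nat.card_eq_fintype_card, GaloisField.card 2 2 two_ne_zero]; rfl
  simpa [hcard] using FiniteField.pow_card x

theorem coe_frobGL (U : GL (Fin 3) (GaloisField 2 2)) :
    (frobGL U : Matrix (Fin 3) (Fin 3) (GaloisField 2 2)) = (U : Matrix _ _ _).map (· ^ 2) := by
  ext; simp [frobGL, frobenius_def]

theorem frobGL_sq : frobGL ^ 2 = 1 := by
  ext U i j
  rw [sq, MulAut.mul_apply, coe_frobGL, coe_frobGL]
  simp [← pow_mul, GaloisField.pow_four_eq_self]

theorem frobGL_pow_of_odd {f : ℕ} (hf : Odd f) : frobGL ^ f = frobGL := by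
  obtain ⟨k, rfl⟩ := hf
  rw [pow_succ, pow_mul, frobGL_sq, one_pow, one_mul]

theorem gmat_map_sq (α β γ : GaloisField 2 2) :
    (gmat α β γ).map (· ^ 2) = gmat (α ^ 2) (β ^ 2) (γ ^ 2) := by
  ext i j; fin_cases i <;> fin_cases j <;> simp [gmat]

theorem gmat_one_mul_gmat_one (β γ β' γ' : GaloisField 2 2) :
    gmat 1 β γ * gmat 1 β' γ' = gmat 1 (β + β') (γ + γ' + β * β' ^ 2) := by
  ext i j
  fin_cases i <;> fin_cases j <;>
    simp [gmat, Matrix.mul_apply, Fin.sum_univ_three, CharTwo.add_sq] <;> ring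

/-- In `Q ⋊ ℤ` (inside `GL₃(𝔽₄) ⋊ ℤ`) with `q = 2^f`, `f` odd, one has
`(g(1,ζ₃,ζ₃),0)⁻¹·(g(1,ζ₃,ζ₃),1)·(g(1,ζ₃,ζ₃),0) = (g(1,ζ₃,ζ₃),1)³·(g(1,0,0),-2)`. -/
theorem stmt17 (f : ℕ) (hf : Odd f) (ζ : GaloisField 2 2) (hζ : ζ ^ 2 + ζ + 1 = 0)
    (M M₀ : GL (Fin 3) (GaloisField 2 2))
    (hM : (M : Matrix (Fin 3) (Fin 3) (GaloisField 2 2)) = gmat 1 ζ ζ)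
    (hM₀ : (M₀ : Matrix (Fin 3) (Fin 3) (GaloisField 2 2)) = gmat 1 0 0) :
    (⟨M, Multiplicative.ofAdd 0⟩ : SemidirectProduct _ (Multiplicative ℤ) (φ f))⁻¹
        * ⟨M, Multiplicative.ofAdd 1⟩ * ⟨M, Multiplicative.ofAdd 0⟩
      = (⟨M, Multiplicative.ofAdd 1⟩ : SemidirectProduct _ (Multiplicative ℤ) (φ f)) ^ 3
        * ⟨M₀, Multiplicative.ofAdd (-2)⟩ := by
  obtain rfl : M₀ = 1 := Units.ext (by rw [hM₀, gmat_one_zero_zero, Units.val_one])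
  have h2 : (2 : GaloisField 2 2) = 0 := CharTwo.two_eq_zero
  have hσM : (frobGL M : Matrix (Fin 3) (Fin 3) (GaloisField 2 2)) = gmat 1 (ζ ^ 2) (ζ ^ 2) := by
    rw [coe_frobGL, hM, gmat_map_sq, one_pow]
  refine SemidirectProduct.conj_eq_pow_three_mul (frobGL ^ f) ?_ ?_ <;> rw [frobGL_pow_of_odd hf]
  · rw [← MulAut.mul_apply, ← sq, frobGL_sq, MulAut.one_apply]
  · refine Units.ext ?_
    rw [Units.val_mul, Units.val_mul, hM, hσM, gmat_one_mul_gmat_one, gmat_one_mul_gmat_one]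
    congr 1
    · linear_combination ζ * h2
    · linear_combination ζ * h2 + ζ ^ 3 * hζ
end
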